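/- arXiv:1403.6600 — 5 statements merged into one kernel-verified Lean document; each statement's English description precedes it below -/
import Mathlib

section
/- The function c ↦ c · e^{-c} · (1+c) on positive reals is maximized at c = (1+√5)/2, the golden ratio. -/
/-- The function `c ↦ c e^{-c} (1+c)` on positive reals is maximized at the
golden ratio `c = (1+√5)/2`. -/
theorem golden_ratio_maximizes (c : ℝ) (hc : 0 < c) :
    c * Real.exp (-c) * (1 + c)
      ≤ ((1 + Real.sqrt 5) / 2) * Real.exp (-((1 + Real.sqrt 5) / 2))
          * (1 + (1 + Real.sqrt 5) / 2) := by
  set s := Real.sqrt 5 with hs_def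
  have hs : s ^ 2 = 5 := Real.sq_sqrt (by norm_num)
  have hs0 : 0 ≤ s := Real.sqrt_nonneg 5
  have hs2 : 2 ≤ s := by nlinarith
  have hs3 : s ≤ 3 := by nlinarith
  set φ : ℝ := (1 + s) / 2 with hφ_def
  set x : ℝ := c - φ with hx_def
  have hxlb : -φ < x := by simp [hx_def]; linarith
  have hpos : (0:ℝ) < 1 + x / 3 := by
    have : φ < 3 := by simp [hφ_def]; linarith
    linarith
  have h1 : 1 + x / 3 ≤ Real.exp (x / 3) := by linarith [Real.add_one_le_exp (x / 3)]
  have h2 : (1 + x / 3) ^ 3 ≤ Real.exp (x / 3) ^ 3 :=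
    pow_le_pow_left₀ hpos.le h1 3
  have h3 : Real.exp (x / 3) ^ 3 = Real.exp x := by
    rw [← Real.exp_nat_mul]
    congr 1; push_cast; ring
  have hb : 0 ≤ (s - 1) / 3 + (2 + s) * x / 27 := by
    nlinarith [mul_le_mul_of_nonneg_left hxlb.le (by linarith : (0:ℝ) ≤ 2 + s)]
  have hdiff : c * (1 + c) ≤ (2 + s) * (1 + x / 3) ^ 3 := by
    nlinarith [mul_nonneg (sq_nonneg x) hb]
  have key : c * (1 + c) ≤ φ * (1 + φ) * Real.exp x := by
    have hphi : φ * (1 + φ) = 2 + s := by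
      field_simp [hφ_def]; nlinarith
    rw [hphi]
    calc c * (1 + c) ≤ (2 + s) * (1 + x / 3) ^ 3 := hdiff
      _ ≤ (2 + s) * Real.exp x := by
          rw [← h3]; exact mul_le_mul_of_nonneg_left h2 (by linarith)
  have hexp : (0:ℝ) < Real.exp (-c) := Real.exp_pos _
  calc c * Real.exp (-c) * (1 + c) = c * (1 + c) * Real.exp (-c) := by ring
    _ ≤ φ * (1 + φ) * Real.exp x * Real.exp (-c) :=
        mul_le_mul_of_nonneg_right key hexp.le
    _ = φ * Real.exp (-φ) * (1 + φ) := by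
        rw [mul_assoc, ← Real.exp_add]
        have : x + -c = -φ := by simp [hx_def]; ring
        rw [this]; ring
end

section
/- Let N ≥ 4 and let P(N,d,k) denote the probability that a hypergeometric Hyp(N,d,k) random variable is odd. Then for all 1 ≤ d ≤ N-1 and 2 ≤ k ≤ N-1, d(N-d)/(N(N-1)) ≤ P(N,d,k) ≤ 1 - d(N-d)/(N(N-1)). -/
/-!
Split the population into `d` marked and `m` unmarked elements, `N = d + m`; `oddCount d m k`
counts the `k`-subsets with an odd number of marked elements. Counting pairs (subset,
distinguished element) gives
`k · odd(d, m, k) = d · even(d - 1, m, k - 1) + m · odd(d, m - 1, k - 1)`, i.e.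
`P(N, d, k) = (d/N)(1 - P(N-1, d-1, k-1)) + ((N-d)/N) P(N-1, d, k-1)`.
The bound `q(d, m) = d m / (N (N - 1))` satisfies the same recurrence with equality,
`q(d, m) = (d/N) q(d - 1, m) + (m/N) q(d, m - 1)`, so `q ≤ P ≤ 1 - q` passes from `k - 1`
to `k`. At `k = 1` it reads `q ≤ d/N ≤ 1 - q`, and when `d = 0` or `m = 0` it is
`0 ≤ P ≤ 1`.
-/

/-- Probability that a hypergeometric `Hyp(N, d, k)` random variable is odd. -/
noncomputable def POdd (N d k : ℕ) : ℝ :=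
  ∑ x ∈ Finset.Icc 1 k,
    if Odd x then (Nat.choose d x * Nat.choose (N - d) (k - x) : ℝ) / Nat.choose N k else 0

open Finset

def oddCount (d m k : ℕ) : ℕ :=
  ∑ p ∈ antidiagonal k with Odd p.1, d.choose p.1 * m.choose p.2

def evenCount (d m k : ℕ) : ℕ :=
  ∑ p ∈ antidiagonal k with Even p.1, d.choose p.1 * m.choose p.2

theorem oddCount_add_evenCount (d m k : ℕ) :
    oddCount d m k + evenCount d m k = (d + m).choose k := by
  simp only [oddCount, evenCount, ← Nat.not_odd_iff_even]
  rw [sum_filter_add_sum_filter_not, Nat.add_choose_eq]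

theorem oddCount_one (d m : ℕ) : oddCount d m 1 = d := by
  rw [oddCount, sum_filter, Nat.sum_antidiagonal_succ]
  simp

theorem succ_mul_choose_succ (n i : ℕ) :
    (i + 1) * (n + 1).choose (i + 1) = (n + 1) * n.choose i := by
  rw [Nat.add_one_mul_choose_eq, mul_comm]

theorem succ_mul_oddCount_succ (d m k : ℕ) :
    (k + 1) * oddCount (d + 1) (m + 1) (k + 1) =
      (d + 1) * evenCount d (m + 1) k + (m + 1) * oddCount (d + 1) m k := by
  have hsplit : (k + 1) * oddCount (d + 1) (m + 1) (k + 1) =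
      ∑ p ∈ antidiagonal (k + 1) with Odd p.1,
          p.1 * ((d + 1).choose p.1 * (m + 1).choose p.2) +
        ∑ p ∈ antidiagonal (k + 1) with Odd p.1,
          p.2 * ((d + 1).choose p.1 * (m + 1).choose p.2) := by
    rw [oddCount, mul_sum, ← sum_add_distrib]
    refine sum_congr rfl fun p hp => ?_
    rw [← add_mul, mem_antidiagonal.mp (mem_filter.mp hp).1]
  have hfirst : ∑ p ∈ antidiagonal (k + 1) with Odd p.1,
      p.1 * ((d + 1).choose p.1 * (m + 1).choose p.2) = (d + 1) * evenCount d (m + 1) k := by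
    rw [sum_filter, Nat.sum_antidiagonal_succ, if_neg Nat.not_odd_zero, zero_add, evenCount,
      sum_filter, mul_sum]
    refine sum_congr rfl fun p _ => ?_
    simp only [Nat.odd_add_one, Nat.not_odd_iff_even]
    split_ifs <;> simp only [← mul_assoc, succ_mul_choose_succ, mul_zero]
  have hsecond : ∑ p ∈ antidiagonal (k + 1) with Odd p.1,
      p.2 * ((d + 1).choose p.1 * (m + 1).choose p.2) = (m + 1) * oddCount (d + 1) m k := by
    rw [sum_filter, Nat.sum_antidiagonal_succ', zero_mul, ite_self, zero_add, oddCount,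
      sum_filter, mul_sum]
    refine sum_congr rfl fun p _ => ?_
    split_ifs <;> simp only [mul_left_comm _ ((d + 1).choose _), succ_mul_choose_succ, mul_zero]
  rw [hsplit, hfirst, hsecond]

noncomputable def oddProb (d m k : ℕ) : ℝ := oddCount d m k / (d + m).choose k

theorem POdd_add_eq_oddProb (d m k : ℕ) : POdd (d + m) d k = oddProb d m k := by
  rw [POdd, oddProb, oddCount, sum_filter, Nat.sum_antidiagonal_eq_sum_range_succ_mk,
    Nat.range_succ_eq_Icc_zero, Icc_eq_cons_Ioc k.zero_le, sum_cons, if_neg Nat.not_odd_zero,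
    zero_add, ← Icc_add_one_left_eq_Ioc, Nat.add_sub_cancel_left]
  push_cast
  rw [sum_div]
  exact sum_congr rfl fun x _ => by split_ifs <;> simp

theorem oddProb_nonneg (d m k : ℕ) : 0 ≤ oddProb d m k := by
  unfold oddProb; positivity

theorem evenCount_div_choose (d m k : ℕ) (hk : k ≤ d + m) :
    (evenCount d m k : ℝ) / (d + m).choose k = 1 - oddProb d m k := by
  have hC : ((d + m).choose k : ℝ) ≠ 0 := by exact_mod_cast (Nat.choose_pos hk).ne'
  rw [oddProb, eq_sub_iff_add_eq, ← add_div, div_eq_one_iff_eq hC]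
  exact_mod_cast (add_comm _ _).trans (oddCount_add_evenCount d m k)

theorem oddProb_le_one (d m k : ℕ) (hk : k ≤ d + m) : oddProb d m k ≤ 1 := by
  have heven : (0 : ℝ) ≤ evenCount d m k / (d + m).choose k := by positivity
  linarith [evenCount_div_choose d m k hk]

theorem oddProb_one (d m : ℕ) : oddProb d m 1 = d / (d + m) := by
  simp [oddProb, oddCount_one]

theorem oddProb_succ_succ_succ (d m k : ℕ) (hk : k ≤ d + m + 1) :
    oddProb (d + 1) (m + 1) (k + 1) =
      (d + 1) / (d + m + 2) * (1 - oddProb d (m + 1) k) +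
        (m + 1) / (d + m + 2) * oddProb (d + 1) m k := by
  have hrec : ((k + 1) * oddCount (d + 1) (m + 1) (k + 1) : ℝ) =
      (d + 1) * evenCount d (m + 1) k + (m + 1) * oddCount (d + 1) m k := by
    exact_mod_cast succ_mul_oddCount_succ d m k
  have hC : ((d + m + 1 + 1) * (d + m + 1).choose k : ℝ) =
      (d + m + 1 + 1).choose (k + 1) * (k + 1) := by
    exact_mod_cast Nat.add_one_mul_choose_eq (d + m + 1) k
  have hpos : (0 : ℝ) < (d + m + 1).choose k := by exact_mod_cast Nat.choose_pos hk
  have hpos' : (0 : ℝ) < (d + m + 1 + 1).choose (k + 1) := by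
    exact_mod_cast Nat.choose_pos (by omega)
  rw [← evenCount_div_choose d (m + 1) k (by omega)]
  unfold oddProb
  rw [show d + 1 + (m + 1) = d + m + 1 + 1 by ring, show d + 1 + m = d + m + 1 by ring,
    show d + (m + 1) = d + m + 1 by ring]
  field_simp
  linear_combination ((d + m + 1 + 1).choose (k + 1) : ℝ) * hrec
    + (oddCount (d + 1) (m + 1) (k + 1) : ℝ) * hC

noncomputable def oddBound (d m : ℕ) : ℝ := d * m / ((d + m) * (d + m - 1))

theorem oddBound_comm (d m : ℕ) : oddBound d m = oddBound m d := by
  rw [oddBound, oddBound, mul_comm (d : ℝ), add_comm (d : ℝ)]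

theorem oddBound_le_div (d m : ℕ) (hd : 1 ≤ d) : oddBound d m ≤ d / (d + m) := by
  have hd' : (1 : ℝ) ≤ d := by exact_mod_cast hd
  have hm : (m : ℝ) / (d + m - 1) ≤ 1 := div_le_one_of_le₀ (by linarith) (by linarith)
  calc oddBound d m = d / (d + m) * (m / (d + m - 1)) := by rw [oddBound, div_mul_div_comm]
    _ ≤ d / (d + m) := mul_le_of_le_one_right (by positivity) hm

theorem oddBound_succ_succ (d m : ℕ) (h : 1 ≤ d + m) :
    (d + 1) / (d + m + 2) * oddBound d (m + 1) + (m + 1) / (d + m + 2) * oddBound (d + 1) m =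
      oddBound (d + 1) (m + 1) := by
  have h' : (1 : ℝ) ≤ d + m := by exact_mod_cast h
  have h₀ : (d : ℝ) + m ≠ 0 := by linarith
  have h₁ : (d : ℝ) + m + 1 ≠ 0 := by linarith
  simp only [oddBound]
  push_cast
  rw [show (d : ℝ) + (m + 1) = d + m + 1 by ring, show (d : ℝ) + 1 + m = d + m + 1 by ring,
    show (d : ℝ) + 1 + (m + 1) = d + m + 2 by ring, add_sub_cancel_right,
    show (d : ℝ) + m + 2 - 1 = d + m + 1 by ring]
  field_simp

theorem oddProb_mem_Icc_of_eq_zero {d m : ℕ} (h : d = 0 ∨ m = 0) (k : ℕ) (hk : k ≤ d + m) :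
    oddProb d m k ∈ Set.Icc (oddBound d m) (1 - oddBound d m) := by
  have hzero : oddBound d m = 0 := by rcases h with rfl | rfl <;> simp [oddBound]
  rw [hzero, sub_zero]
  exact ⟨oddProb_nonneg d m k, oddProb_le_one d m k hk⟩

theorem oddProb_mem_Icc {k : ℕ} (hk : 1 ≤ k) {d m : ℕ} (hkdm : k < d + m) :
    oddProb d m k ∈ Set.Icc (oddBound d m) (1 - oddBound d m) := by
  induction k, hk using Nat.le_induction generalizing d m with
  | base =>
    obtain rfl | hd := Nat.eq_zero_or_pos d
    · exact oddProb_mem_Icc_of_eq_zero (.inl rfl) 1 hkdm.le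
    obtain rfl | hm := Nat.eq_zero_or_pos m
    · exact oddProb_mem_Icc_of_eq_zero (.inr rfl) 1 hkdm.le
    have hsum : (d : ℝ) / (d + m) + m / (m + d) = 1 := by
      rw [add_comm (m : ℝ), ← add_div, div_self (by positivity)]
    have hle := oddBound_le_div m d hm
    rw [oddBound_comm] at hle
    rw [oddProb_one]
    exact ⟨oddBound_le_div d m hd, by linarith⟩
  | succ k hk ih =>
    rcases d with _ | d
    · exact oddProb_mem_Icc_of_eq_zero (.inl rfl) (k + 1) hkdm.le
    rcases m with _ | m
    · exact oddProb_mem_Icc_of_eq_zero (.inr rfl) (k + 1) hkdm.le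
    obtain ⟨hA₁, hA₂⟩ := ih (d := d) (m := m + 1) (by omega)
    obtain ⟨hB₁, hB₂⟩ := ih (d := d + 1) (m := m) (by omega)
    rw [oddProb_succ_succ_succ d m k (by omega), ← oddBound_succ_succ d m (by omega)]
    set a : ℝ := (d + 1) / (d + m + 2)
    set b : ℝ := (m + 1) / (d + m + 2)
    have ha : 0 ≤ a := by positivity
    have hb : 0 ≤ b := by positivity
    have hab : a + b = 1 := by rw [← add_div, div_eq_one_iff_eq (by positivity)]; ring
    constructor
    · linarith [mul_le_mul_of_nonneg_left hA₂ ha, mul_le_mul_of_nonneg_left hB₁ hb]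
    · linarith [mul_le_mul_of_nonneg_left hA₁ ha, mul_le_mul_of_nonneg_left hB₂ hb]

theorem hypergeometric_odd_bounds_general (N d k : ℕ)
    (hdN : d ≤ N - 1) (hk2 : 2 ≤ k) (hkN : k ≤ N - 1) :
    (d : ℝ) * ((N : ℝ) - d) / ((N : ℝ) * ((N : ℝ) - 1)) ≤ POdd N d k ∧
    POdd N d k ≤ 1 - (d : ℝ) * ((N : ℝ) - d) / ((N : ℝ) * ((N : ℝ) - 1)) := by
  obtain ⟨m, rfl⟩ : ∃ m, N = d + m := ⟨N - d, by omega⟩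
  have hm : ((d + m : ℕ) : ℝ) - d = m := by push_cast; ring
  rw [POdd_add_eq_oddProb, hm, Nat.cast_add]
  exact oddProb_mem_Icc (by omega) (by omega)

/-- For `N ≥ 4`, `1 ≤ d ≤ N-1`, `2 ≤ k ≤ N-1`:
`d(N-d)/(N(N-1)) ≤ P(N,d,k) ≤ 1 - d(N-d)/(N(N-1))`. -/
theorem hypergeometric_odd_bounds (N d k : ℕ) (hN : 4 ≤ N)
    (hd1 : 1 ≤ d) (hdN : d ≤ N - 1) (hk2 : 2 ≤ k) (hkN : k ≤ N - 1) :
    (d : ℝ) * ((N : ℝ) - d) / ((N : ℝ) * ((N : ℝ) - 1)) ≤ POdd N d k ∧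
    POdd N d k ≤ 1 - (d : ℝ) * ((N : ℝ) - d) / ((N : ℝ) * ((N : ℝ) - 1)) :=
  hypergeometric_odd_bounds_general N d k hdN hk2 hkN
end

section
/- For any real c > 0 and integer n > c², (1 - c/n)^{n-1} ≥ e^{-c} · (1 - c²/n). -/
/-!
Put `t = c/n`. From `log (1 - t) ≥ 1 - 1/(1 - t) = -t/(1 - t)` we get
`(1 - c/n)^(n-1) ≥ exp (-(n - 1) c/(n - c))`, and `e^x ≥ 1 + x` bounds this below by
`e^{-c} (1 + c(1 - c)/(n - c))`. The excess of `1 + c(1 - c)/(n - c)` over `1 - c²/n` is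
`c (n - c²)/(n (n - c))`, which is nonnegative exactly when `n ≥ c²`.
-/

open Real

lemma Real.exp_neg_div_one_sub_le {t : ℝ} (ht : t < 1) : exp (-(t / (1 - t))) ≤ 1 - t := by
  have hpos : 0 < 1 - t := by linarith
  calc exp (-(t / (1 - t))) = exp (1 - (1 - t)⁻¹) := by congr 1; field_simp; ring
    _ ≤ exp (log (1 - t)) := exp_le_exp.mpr (one_sub_inv_le_log_of_pos hpos)
    _ = 1 - t := exp_log hpos

lemma Real.exp_neg_mul_div_one_sub_le_pow {t : ℝ} (ht : t < 1) (m : ℕ) :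
    exp (-(m * (t / (1 - t)))) ≤ (1 - t) ^ m := by
  rw [neg_mul_eq_mul_neg, exp_nat_mul]
  exact pow_le_pow_left₀ (exp_pos _).le (exp_neg_div_one_sub_le ht) m

lemma Real.exp_neg_mul_one_sub_sq_div_le {c N : ℝ} (hc : 0 ≤ c) (hcN : c < N) (hN : c ^ 2 ≤ N) :
    exp (-c) * (1 - c ^ 2 / N) ≤ exp (-((N - 1) * (c / (N - c)))) := by
  have hNpos : 0 < N := by linarith
  have hNc : 0 < N - c := by linarith
  have hexcess : 1 - c ^ 2 / N ≤ c * (1 - c) / (N - c) + 1 := by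
    have hnonneg : 0 ≤ c * (N - c ^ 2) / (N * (N - c)) := by
      apply div_nonneg <;> nlinarith
    have hid : c * (1 - c) / (N - c) + 1 - (1 - c ^ 2 / N) = c * (N - c ^ 2) / (N * (N - c)) := by
      field_simp; ring
    linarith
  calc exp (-c) * (1 - c ^ 2 / N)
      ≤ exp (-c) * exp (c * (1 - c) / (N - c)) :=
        mul_le_mul_of_nonneg_left (hexcess.trans (add_one_le_exp _)) (exp_pos _).le
    _ = exp (-((N - 1) * (c / (N - c)))) := by
        rw [← exp_add]; congr 1; field_simp; ring

/-- For `c > 0` and `n > c²`, `(1 - c/n)^{n-1} ≥ e^{-c} (1 - c²/n)`. -/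
theorem one_sub_c_div_n_pow (c : ℝ) (hc : 0 < c) (n : ℕ) (hn : c ^ 2 < n) :
    (1 - c / n) ^ (n - 1) ≥ Real.exp (-c) * (1 - c ^ 2 / n) := by
  have hn1 : 1 ≤ n := Nat.one_le_iff_ne_zero.mpr fun h => by
    subst h; norm_num at hn; nlinarith
  have hN1 : (1 : ℝ) ≤ n := by exact_mod_cast hn1
  have hcN : c < n := by nlinarith
  have hratio : c / n / (1 - c / n) = c / (n - c) := by
    field_simp
  calc Real.exp (-c) * (1 - c ^ 2 / n)
      ≤ exp (-((n - 1) * (c / (n - c)))) := exp_neg_mul_one_sub_sq_div_le hc.le hcN hn.le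
    _ = exp (-(((n - 1 : ℕ) : ℝ) * (c / n / (1 - c / n)))) := by
        rw [hratio, Nat.cast_sub hn1, Nat.cast_one]
    _ ≤ (1 - c / n) ^ (n - 1) :=
        exp_neg_mul_div_one_sub_le_pow ((div_lt_one (by linarith)).mpr hcN) _
end

section
/- Let 0 < p ≤ 1/2 and 1 ≤ i ≤ n-1 with i(n-i)p²(1-p)^{-2} ≤ 1/2. Then p^{(i)} = ∑_{ℓ=1}^{min(i,n-i)} C(i,ℓ)C(n-i,ℓ)p^{2ℓ}(1-p)^{n-2ℓ} ≤ i(n-i)p²(1-p)^{n-2}·(1 + 2i(n-i)p²/(1-p)²). -/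
/-!
Bounding `C(a,ℓ) ≤ a^ℓ` turns the `ℓ`-th term into `a b p² q^{n-2} x^{ℓ-1}` with
`x = a b p²/q²`, so the whole sum is at most `a b p² q^{n-2}` times a partial geometric
series in `x`, and `∑ x^j ≤ 1/(1-x) ≤ 1 + 2x` once `0 ≤ x ≤ 1/2`.
-/

open Finset

lemma geom_sum_le_one_add_two_mul {x : ℝ} (hx0 : 0 ≤ x) (hx : x ≤ 1 / 2) (M : ℕ) :
    ∑ j ∈ range M, x ^ j ≤ 1 + 2 * x := by
  have hx1 : x < 1 := by linarith
  calc ∑ j ∈ range M, x ^ j ≤ x ^ 0 / (1 - x) := by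
        rw [range_eq_Ico]; exact geom_sum_Ico_le_of_lt_one hx0 hx1
    _ ≤ 1 + 2 * x := by
        rw [pow_zero, div_le_iff₀ (by linarith)]
        nlinarith

lemma choose_mul_choose_mul_pow_le (a b : ℕ) {n ℓ : ℕ} (hℓ : 1 ≤ ℓ) (hℓn : 2 * ℓ ≤ n)
    (p : ℝ) {q : ℝ} (hq : 0 < q) :
    (a.choose ℓ : ℝ) * b.choose ℓ * p ^ (2 * ℓ) * q ^ (n - 2 * ℓ)
      ≤ a * b * p ^ 2 * q ^ (n - 2) * (a * b * p ^ 2 / q ^ 2) ^ (ℓ - 1) := by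
  obtain ⟨j, rfl⟩ : ∃ j, ℓ = j + 1 := ⟨ℓ - 1, by omega⟩
  have hq_pow : q ^ (n - 2) = q ^ (n - 2 * (j + 1)) * (q ^ 2) ^ j := by
    rw [← pow_mul, ← pow_add]; congr 1; omega
  calc (a.choose (j + 1) : ℝ) * b.choose (j + 1) * p ^ (2 * (j + 1)) * q ^ (n - 2 * (j + 1))
      ≤ (a : ℝ) ^ (j + 1) * (b : ℝ) ^ (j + 1) * (p ^ 2) ^ (j + 1) * q ^ (n - 2 * (j + 1)) := by
        rw [pow_mul]
        gcongr <;> exact_mod_cast Nat.choose_le_pow _ _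
    _ = a * b * p ^ 2 * q ^ (n - 2) * (a * b * p ^ 2 / q ^ 2) ^ (j + 1 - 1) := by
        rw [hq_pow, Nat.add_sub_cancel, div_pow]
        field_simp
        ring

lemma sum_choose_mul_choose_mul_pow_le {a b n : ℕ} (hab : a + b ≤ n) (p : ℝ) {q : ℝ}
    (hq : 0 < q) (hx : a * b * p ^ 2 / q ^ 2 ≤ 1 / 2) :
    ∑ ℓ ∈ Icc 1 (min a b), (a.choose ℓ : ℝ) * b.choose ℓ * p ^ (2 * ℓ) * q ^ (n - 2 * ℓ)
      ≤ a * b * p ^ 2 * q ^ (n - 2) * (1 + 2 * a * b * p ^ 2 / q ^ 2) := by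
  set x : ℝ := a * b * p ^ 2 / q ^ 2
  set c : ℝ := a * b * p ^ 2 * q ^ (n - 2)
  have hx0 : 0 ≤ x := by positivity
  calc ∑ ℓ ∈ Icc 1 (min a b), (a.choose ℓ : ℝ) * b.choose ℓ * p ^ (2 * ℓ) * q ^ (n - 2 * ℓ)
      ≤ ∑ ℓ ∈ Icc 1 (min a b), c * x ^ (ℓ - 1) := by
        refine sum_le_sum fun ℓ hℓ => ?_
        rw [mem_Icc] at hℓ
        exact choose_mul_choose_mul_pow_le a b hℓ.1 (by omega) p hq
    _ = c * ∑ j ∈ range (min a b), x ^ j := by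
        rw [mul_sum, ← Ico_add_one_right_eq_Icc, sum_Ico_eq_sum_range]
        simp
    _ ≤ c * (1 + 2 * x) := by
        gcongr
        exact geom_sum_le_one_add_two_mul hx0 hx _
    _ = a * b * p ^ 2 * q ^ (n - 2) * (1 + 2 * a * b * p ^ 2 / q ^ 2) := by
        simp only [c, x]; ring

theorem neutral_mutation_upper_bound_general (p : ℝ) (hp : p ≤ 1 / 2)
    (i n : ℕ) (hin : i ≤ n - 1)
    (hx : (i : ℝ) * ((n : ℝ) - i) * p ^ 2 / (1 - p) ^ 2 ≤ 1 / 2) :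
    (∑ ℓ ∈ Finset.Icc 1 (min i (n - i)),
        (Nat.choose i ℓ : ℝ) * Nat.choose (n - i) ℓ * p ^ (2 * ℓ) * (1 - p) ^ (n - 2 * ℓ))
      ≤ (i : ℝ) * ((n : ℝ) - i) * p ^ 2 * (1 - p) ^ (n - 2)
          * (1 + 2 * (i : ℝ) * ((n : ℝ) - i) * p ^ 2 / (1 - p) ^ 2) := by
  have hcast : ((n - i : ℕ) : ℝ) = n - i := Nat.cast_sub (by omega)
  have key := sum_choose_mul_choose_mul_pow_le (a := i) (b := n - i) (n := n) (by omega) p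
    (q := 1 - p) (by linarith) (by rwa [hcast])
  rwa [hcast] at key

/-- Upper bound on the probability `p^{(i)}` that a standard bit mutation of a
string with `i` ones produces a different string with exactly `i` ones,
assuming `i(n-i)p²/(1-p)² ≤ 1/2`:
`p^{(i)} ≤ i(n-i) p² (1-p)^{n-2} (1 + 2i(n-i)p²/(1-p)²)`. -/
theorem neutral_mutation_upper_bound (p : ℝ) (hp0 : 0 < p) (hp : p ≤ 1 / 2)
    (i n : ℕ) (hi : 1 ≤ i) (hin : i ≤ n - 1)
    (hx : (i : ℝ) * ((n : ℝ) - i) * p ^ 2 / (1 - p) ^ 2 ≤ 1 / 2) :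
    (∑ ℓ ∈ Finset.Icc 1 (min i (n - i)),
        (Nat.choose i ℓ : ℝ) * Nat.choose (n - i) ℓ * p ^ (2 * ℓ) * (1 - p) ^ (n - 2 * ℓ))
      ≤ (i : ℝ) * ((n : ℝ) - i) * p ^ 2 * (1 - p) ^ (n - 2)
          * (1 + 2 * (i : ℝ) * ((n : ℝ) - i) * p ^ 2 / (1 - p) ^ 2) :=
  neutral_mutation_upper_bound_general p hp i n hin hx
end

section
/- The probability that a standard bit mutation with mutation probability p (0 < p < 1) of a bit string with fewer than i ones creates a string with exactly i ones is at most p·(n-i+1)·e^{(pn)²/4 + 1}. -/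
/-! Writing `a = i - d` and `b = n - i + d`, each summand is a product of two binomial
probabilities, so the sum is at most `1`. On the other hand `C(m, k) ≤ m^k / k!` and
`(d + ℓ)! ≥ d!` bound it by `(p b)^d / d! · e^{a b p²}`. Since `a + b = n`, `a b ≤ n² / 4`;
since `b ≤ d (n - i + 1)` and `d^d / d! ≤ e^d`, the prefactor is at most `(c e)^d` with
`c = p (n - i + 1)`. If `c e ≤ 1` then `(c e)^d ≤ c e` as `d ≥ 1`; otherwise the bound `1`
already suffices. -/

open Finset Nat Real

/-- The probability that standard bit mutation turns a string with `a` ones and `b` zeros into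
one with exactly `a + d` ones: for each `ℓ`, it flips `d + ℓ` of the zeros and `ℓ` of the ones. -/
noncomputable def mutationJumpProb (p : ℝ) (a b d : ℕ) : ℝ :=
  ∑ ℓ ∈ range (a + 1),
    (b.choose (d + ℓ) : ℝ) * a.choose ℓ * p ^ (d + 2 * ℓ) * (1 - p) ^ (a + b - (d + 2 * ℓ))

section

variable {p : ℝ}

lemma choose_mul_pow_mul_one_sub_pow_le_one (hp0 : 0 ≤ p) (hp1 : p ≤ 1) (n k : ℕ) :
    (n.choose k : ℝ) * p ^ k * (1 - p) ^ (n - k) ≤ 1 := by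
  simpa [ProbabilityTheory.binomial_real_singleton] using
    MeasureTheory.measureReal_le_one (μ := ProbabilityTheory.binomial n ⟨p, hp0, hp1⟩) (s := {k})

lemma sum_choose_mul_pow_mul_one_sub_pow (p : ℝ) (n : ℕ) :
    ∑ k ∈ range (n + 1), (n.choose k : ℝ) * p ^ k * (1 - p) ^ (n - k) = 1 := by
  simpa [mul_comm, mul_left_comm, mul_assoc] using (add_pow p (1 - p) n).symm

lemma mutationJumpProb_term_eq {a b d ℓ : ℕ} (hℓ : ℓ ≤ a) :
    (b.choose (d + ℓ) : ℝ) * a.choose ℓ * p ^ (d + 2 * ℓ) * (1 - p) ^ (a + b - (d + 2 * ℓ)) =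
      ((b.choose (d + ℓ) : ℝ) * p ^ (d + ℓ) * (1 - p) ^ (b - (d + ℓ))) *
        ((a.choose ℓ : ℝ) * p ^ ℓ * (1 - p) ^ (a - ℓ)) := by
  rcases le_or_gt (d + ℓ) b with h | h
  · rw [show a + b - (d + 2 * ℓ) = (b - (d + ℓ)) + (a - ℓ) by omega,
      show d + 2 * ℓ = (d + ℓ) + ℓ by omega, pow_add, pow_add]
    ring
  · simp [Nat.choose_eq_zero_of_lt h]

lemma mutationJumpProb_le_one (hp0 : 0 ≤ p) (hp1 : p ≤ 1) (a b d : ℕ) :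
    mutationJumpProb p a b d ≤ 1 := by
  have hp1' : 0 ≤ 1 - p := by linarith
  calc mutationJumpProb p a b d
      ≤ ∑ ℓ ∈ range (a + 1), (a.choose ℓ : ℝ) * p ^ ℓ * (1 - p) ^ (a - ℓ) := by
        refine sum_le_sum fun ℓ hℓ => ?_
        rw [mutationJumpProb_term_eq (by simpa [Nat.lt_succ_iff] using hℓ)]
        exact mul_le_of_le_one_left (by positivity)
          (choose_mul_pow_mul_one_sub_pow_le_one hp0 hp1 _ _)
    _ = 1 := sum_choose_mul_pow_mul_one_sub_pow p a

lemma mutationJumpProb_le_pow_div_factorial_mul_exp (hp0 : 0 ≤ p) (hp1 : p ≤ 1) (a b d : ℕ) :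
    mutationJumpProb p a b d ≤ (p * b) ^ d / d ! * exp (a * b * p ^ 2) := by
  have hp1' : 0 ≤ 1 - p := by linarith
  calc mutationJumpProb p a b d
      ≤ ∑ ℓ ∈ range (a + 1), (p * b) ^ d / d ! * ((a * b * p ^ 2) ^ ℓ / ℓ !) := by
        refine sum_le_sum fun ℓ _ => ?_
        have hb : (b.choose (d + ℓ) : ℝ) ≤ (b : ℝ) ^ (d + ℓ) / d ! :=
          (choose_le_pow_div _ _).trans
            (div_le_div_of_nonneg_left (by positivity) (by positivity)
              (by exact_mod_cast factorial_le (le_add_right le_rfl)))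
        calc (b.choose (d + ℓ) : ℝ) * a.choose ℓ * p ^ (d + 2 * ℓ)
              * (1 - p) ^ (a + b - (d + 2 * ℓ))
            ≤ (b : ℝ) ^ (d + ℓ) / d ! * ((a : ℝ) ^ ℓ / ℓ !) * p ^ (d + 2 * ℓ) * 1 := by
              gcongr
              · exact choose_le_pow_div _ _
              · exact pow_le_one₀ hp1' (by linarith)
          _ = (p * b) ^ d / d ! * ((a * b * p ^ 2) ^ ℓ / ℓ !) := by
              rw [pow_add, pow_add, mul_pow, mul_pow, mul_pow, ← pow_mul]
              ring
    _ = (p * b) ^ d / d ! * ∑ ℓ ∈ range (a + 1), (a * b * p ^ 2) ^ ℓ / ℓ ! :=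
        (mul_sum ..).symm
    _ ≤ (p * b) ^ d / d ! * exp (a * b * p ^ 2) := by
        gcongr
        exact sum_le_exp_of_nonneg (by positivity) _

end

lemma pow_div_factorial_le_mul_exp_one_pow {x c : ℝ} {d : ℕ} (hx : 0 ≤ x) (hc : 0 ≤ c)
    (hxc : x ≤ c * d) : x ^ d / d ! ≤ (c * exp 1) ^ d := by
  calc x ^ d / d ! ≤ (c * d) ^ d / d ! := by gcongr
    _ = c ^ d * ((d : ℝ) ^ d / d !) := by rw [mul_pow, mul_div_assoc]
    _ ≤ c ^ d * exp 1 ^ d := by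
        rw [← exp_nat_mul, mul_one]
        gcongr
        exact pow_div_factorial_le_exp _ (Nat.cast_nonneg d) d
    _ = (c * exp 1) ^ d := (mul_pow ..).symm

/-- The probability that a standard bit mutation with mutation probability `p`
of a bit string with `i - d < i` ones (for any `d ≥ 1`) creates a string with
exactly `i` ones is at most `p (n-i+1) e^{(pn)²/4 + 1}`. -/
theorem jump_to_level_bound (p : ℝ) (hp0 : 0 < p) (hp1 : p < 1)
    (n i d : ℕ) (hd : 1 ≤ d) (hdi : d ≤ i) (hin : i ≤ n) :
    (∑ ℓ ∈ Finset.range (i - d + 1),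
        (Nat.choose (n - i + d) (d + ℓ) : ℝ) * Nat.choose (i - d) ℓ
          * p ^ (d + 2 * ℓ) * (1 - p) ^ (n - d - 2 * ℓ))
      ≤ p * ((n : ℝ) - i + 1) * Real.exp ((p * n) ^ 2 / 4 + 1) := by
  refine (sum_congr rfl fun ℓ _ => ?_ : _ = mutationJumpProb p (i - d) (n - i + d) d).trans_le ?_
  · congr 2; omega
  rw [exp_add, mul_comm _ (exp 1), ← mul_assoc]
  set a := i - d
  set b := n - i + d with hb
  set c := p * ((n : ℝ) - i + 1)
  have hni : (0 : ℝ) ≤ n - i := by rw [sub_nonneg]; exact_mod_cast hin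
  have hc : 0 ≤ c := mul_nonneg hp0.le (by linarith)
  have hlead : (p * b) ^ d / d ! ≤ (c * exp 1) ^ d := by
    refine pow_div_factorial_le_mul_exp_one_pow (by positivity) hc ?_
    have hd' : (1 : ℝ) ≤ d := by exact_mod_cast hd
    rw [hb, Nat.cast_add, Nat.cast_sub hin]
    nlinarith [mul_nonneg (mul_nonneg hp0.le hni) (sub_nonneg.2 hd')]
  have hexp : exp (a * b * p ^ 2) ≤ exp ((p * n) ^ 2 / 4) := by
    have hab : (a : ℝ) + b = n := by exact_mod_cast (by omega : a + b = n)
    rw [exp_le_exp, ← hab]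
    nlinarith [four_mul_le_sq_add (a : ℝ) b, sq_nonneg p]
  rcases le_or_gt (c * exp 1) 1 with hce | hce
  · calc mutationJumpProb p a b d
        ≤ (p * b) ^ d / d ! * exp (a * b * p ^ 2) :=
          mutationJumpProb_le_pow_div_factorial_mul_exp hp0.le hp1.le a b d
      _ ≤ c * exp 1 * exp ((p * n) ^ 2 / 4) := by
          gcongr
          exact hlead.trans (pow_le_of_le_one (by positivity) hce (by omega))
  · calc mutationJumpProb p a b d ≤ 1 := mutationJumpProb_le_one hp0.le hp1.le a b d
      _ ≤ c * exp 1 * exp ((p * n) ^ 2 / 4) :=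
          one_le_mul_of_one_le_of_one_le hce.le (one_le_exp (by positivity))
end
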